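/- For all integers n ≥ 1 and all α ∈ [0,1], the inequality ∫₀^α ((1+s)^{2/n} − (1−s)^{2/n}) ds ≥ (2/n) α² holds. -/

import Mathlib

/-!
For `p = 2 / n` the exponent `p - 1` lies outside `(0, 1)`, so `t ↦ t ^ (p - 1)` is convex on
`(0, ∞)` and Jensen at the midpoint of `1 + s` and `1 - s` gives
`(1 + s) ^ (p - 1) + (1 - s) ^ (p - 1) ≥ 2`. Hence `(1 + s) ^ p - (1 - s) ^ p` has derivative at
least `2 p` and is bounded below by `2 p s` on `[0, 1]`; integrating over `[0, α]` gives `p α²`.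
-/

open Real Set

/-- `x ^ q = exp (q log x)` with `q log x` convex when `q ≤ 0`, since `log` is concave. -/
theorem convexOn_rpow_of_nonpos {q : ℝ} (hq : q ≤ 0) :
    ConvexOn ℝ (Ioi 0) fun x : ℝ ↦ x ^ q := by
  have hlog : ConvexOn ℝ (Ioi 0) fun x ↦ log x * q := by
    refine (strictConcaveOn_log_Ioi.concaveOn.neg.smul (neg_nonneg.2 hq)).congr fun x _ ↦ ?_
    simp only [Pi.neg_apply, smul_eq_mul]
    ring
  have himage : Convex ℝ ((fun x ↦ log x * q) '' Ioi 0) :=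
    (isPreconnected_Ioi.image _ ((continuousOn_log.mono fun _ hx ↦ ne_of_gt hx).mul
      continuousOn_const)).convex
  exact ((convexOn_exp.subset (subset_univ _) himage).comp hlog
    (exp_monotone.monotoneOn _)).congr fun x hx ↦ (rpow_def_of_pos hx q).symm

theorem two_le_one_add_rpow_add_one_sub_rpow {q s : ℝ} (hq : q ≤ 0 ∨ 1 ≤ q) (hs : |s| < 1) :
    2 ≤ (1 + s) ^ q + (1 - s) ^ q := by
  have hconv : ConvexOn ℝ (Ioi 0) fun x : ℝ ↦ x ^ q := hq.elim convexOn_rpow_of_nonpos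
    fun hq ↦ (convexOn_rpow hq).subset Ioi_subset_Ici_self (convex_Ioi 0)
  obtain ⟨hs₁, hs₂⟩ := abs_lt.1 hs
  have hmid := hconv.2 (x := 1 + s) (y := 1 - s) (by simp only [mem_Ioi]; linarith)
    (by simp only [mem_Ioi]; linarith) (by norm_num : (0 : ℝ) ≤ 1 / 2)
    (by norm_num : (0 : ℝ) ≤ 1 / 2) (by norm_num)
  simp only [smul_eq_mul] at hmid
  rw [show 1 / 2 * (1 + s) + 1 / 2 * (1 - s) = 1 by ring, one_rpow] at hmid
  linarith

theorem continuous_one_add_rpow_sub_one_sub_rpow {p : ℝ} (hp : 0 ≤ p) :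
    Continuous fun s : ℝ ↦ (1 + s) ^ p - (1 - s) ^ p :=
  ((continuous_const.add continuous_id).rpow_const fun _ ↦ Or.inr hp).sub
    ((continuous_const.sub continuous_id).rpow_const fun _ ↦ Or.inr hp)

theorem hasDerivAt_one_add_rpow_sub_one_sub_rpow {p s : ℝ} (hs : |s| < 1) :
    HasDerivAt (fun t ↦ (1 + t) ^ p - (1 - t) ^ p)
      (p * ((1 + s) ^ (p - 1) + (1 - s) ^ (p - 1))) s := by
  obtain ⟨hs₁, hs₂⟩ := abs_lt.1 hs
  have hplus := ((hasDerivAt_id' s).const_add 1).rpow_const (p := p) (Or.inl (by linarith))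
  have hminus := ((hasDerivAt_id' s).const_sub 1).rpow_const (p := p) (Or.inl (by linarith))
  exact (hplus.fun_sub hminus).congr_deriv (by ring)

theorem mul_le_one_add_rpow_sub_one_sub_rpow {p s : ℝ} (hp₀ : 0 ≤ p) (hp : p ≤ 1 ∨ 2 ≤ p)
    (hs₀ : 0 ≤ s) (hs₁ : s ≤ 1) :
    2 * p * s ≤ (1 + s) ^ p - (1 - s) ^ p := by
  have hderiv : ∀ t ∈ interior (Icc (0 : ℝ) 1),
      HasDerivAt (fun t ↦ (1 + t) ^ p - (1 - t) ^ p)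
        (p * ((1 + t) ^ (p - 1) + (1 - t) ^ (p - 1))) t := by
    rw [interior_Icc]
    exact fun t ht ↦ hasDerivAt_one_add_rpow_sub_one_sub_rpow
      (abs_lt.2 ⟨by linarith [ht.1], ht.2⟩)
  have hderiv_ge : ∀ t ∈ interior (Icc (0 : ℝ) 1),
      2 * p ≤ deriv (fun t ↦ (1 + t) ^ p - (1 - t) ^ p) t := by
    intro t ht
    rw [(hderiv t ht).deriv, mul_comm 2 p]
    rw [interior_Icc] at ht
    have hq : p - 1 ≤ 0 ∨ 1 ≤ p - 1 := hp.imp (by intro h; linarith) (by intro h; linarith)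
    exact mul_le_mul_of_nonneg_left (two_le_one_add_rpow_add_one_sub_rpow hq
      (abs_lt.2 ⟨by linarith [ht.1], ht.2⟩)) hp₀
  simpa using (convex_Icc (0 : ℝ) 1).mul_sub_le_image_sub_of_le_deriv
    (continuous_one_add_rpow_sub_one_sub_rpow hp₀).continuousOn
    (fun t ht ↦ (hderiv t ht).differentiableAt.differentiableWithinAt) hderiv_ge
    0 (left_mem_Icc.2 zero_le_one) s ⟨hs₀, hs₁⟩ hs₀

theorem mul_sq_le_integral_one_add_rpow_sub_one_sub_rpow {p α : ℝ} (hp₀ : 0 ≤ p)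
    (hp : p ≤ 1 ∨ 2 ≤ p) (hα₀ : 0 ≤ α) (hα₁ : α ≤ 1) :
    p * α ^ 2 ≤ ∫ s in (0 : ℝ)..α, ((1 + s) ^ p - (1 - s) ^ p) := by
  calc p * α ^ 2 = ∫ s in (0 : ℝ)..α, 2 * p * s := by
        rw [intervalIntegral.integral_const_mul, integral_id]
        ring
    _ ≤ _ := intervalIntegral.integral_mono_on hα₀
        ((continuous_const_mul _).intervalIntegrable _ _)
        ((continuous_one_add_rpow_sub_one_sub_rpow hp₀).intervalIntegrable _ _)
        fun s hs ↦ mul_le_one_add_rpow_sub_one_sub_rpow hp₀ hp hs.1 (hs.2.trans hα₁)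

theorem key_integral_inequality_general (n : ℕ) (α : ℝ)
    (hα : α ∈ Set.Icc (0 : ℝ) 1) :
    ∫ s in (0:ℝ)..α, ((1 + s) ^ ((2 : ℝ) / n) - (1 - s) ^ ((2 : ℝ) / n)) ≥
      2 / n * α ^ 2 := by
  have hp : (2 : ℝ) / n ≤ 1 ∨ 2 ≤ (2 : ℝ) / n := by
    rcases Nat.lt_or_ge n 2 with hn | hn
    -- `2 / 0 = 0` in `ℝ`, so `n = 0` gives the exponent `0`.
    · interval_cases n <;> norm_num
    · left
      rw [div_le_one (by positivity)]
      exact_mod_cast hn.trans' (by norm_num)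
  exact mul_sq_le_integral_one_add_rpow_sub_one_sub_rpow (by positivity) hp hα.1 hα.2

/-- For all integers `n ≥ 1` and `α ∈ [0,1]`,
`∫₀^α ((1+s)^{2/n} − (1−s)^{2/n}) ds ≥ (2/n) α²`. -/
theorem key_integral_inequality (n : ℕ) (hn : 1 ≤ n) (α : ℝ)
    (hα : α ∈ Set.Icc (0 : ℝ) 1) :
    ∫ s in (0:ℝ)..α, ((1 + s) ^ ((2 : ℝ) / n) - (1 - s) ^ ((2 : ℝ) / n)) ≥
      2 / n * α ^ 2 :=
  key_integral_inequality_general n α hα
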